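/- arXiv:1912.10069 — 11 statements merged into one kernel-verified Lean document; each statement's English description precedes it below -/
import Mathlib

section
/- For every β ≥ 0, both shading functions are nondecreasing on [0,1]: for all 0 ≤ x ≤ x' ≤ 1 one has min(1, x + √(8β·x·(1−x)) + 7β) ≤ min(1, x' + √(8β·x'·(1−x')) + 7β) and min(1, x + √(2β·x·(1−x)) + 4β) ≤ min(1, x' + √(2β·x'·(1−x')) + 4β). -/
/-!
`x ↦ x + √(c·x·(1−x)) + a` is concave on `[0,1]` (a square root of a concave parabola plus an
affine function), and its value at `1` is `1 + a ≥ 1`. On `[x, 1]` a concave function stays above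
the smaller of its two endpoint values, so for `x ≤ x'` the value at `x'` is at least
`min (f x) 1`; truncating at `1` therefore gives a nondecreasing function.
-/

open Set

lemma ConcaveOn.monotoneOn_min_of_le_right {𝕜 β : Type*} [Field 𝕜] [LinearOrder 𝕜]
    [IsStrictOrderedRing 𝕜] [AddCommGroup β] [LinearOrder β] [IsOrderedAddMonoid β]
    [Module 𝕜 β] [IsStrictOrderedModule 𝕜 β] {f : 𝕜 → β} {a b : 𝕜} {t : β}
    (hf : ConcaveOn 𝕜 (Icc a b) f) (ht : t ≤ f b) :
    MonotoneOn (fun x ↦ min t (f x)) (Icc a b) := by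
  intro x hx y hy hxy
  have hy_ge : min (f x) (f b) ≤ f y :=
    hf.min_le_of_mem_Icc hx (right_mem_Icc.2 (hx.1.trans hx.2)) ⟨hxy, hy.2⟩
  have : min t (f x) ≤ min (f x) (f b) := le_min (min_le_right _ _) ((min_le_left _ _).trans ht)
  exact le_min (min_le_left _ _) (this.trans hy_ge)

lemma concaveOn_mul_one_sub {c : ℝ} (hc : 0 ≤ c) :
    ConcaveOn ℝ univ fun x : ℝ ↦ c * x * (1 - x) := by
  have : ConcaveOn ℝ univ fun x : ℝ ↦ c • x - c • x ^ 2 :=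
    ((concaveOn_id convex_univ).smul hc).sub ((Even.convexOn_pow even_two).smul hc)
  convert this using 2 with x
  simp only [smul_eq_mul]; ring

lemma concaveOn_sqrt_mul_one_sub {c : ℝ} (hc : 0 ≤ c) :
    ConcaveOn ℝ (Icc 0 1) fun x : ℝ ↦ √(c * x * (1 - x)) := by
  set q : ℝ → ℝ := fun x ↦ c * x * (1 - x)
  have hq : ConcaveOn ℝ (Icc 0 1) q :=
    (concaveOn_mul_one_sub hc).subset (subset_univ _) (convex_Icc 0 1)
  have himage_nonneg : q '' Icc 0 1 ⊆ Ici 0 := by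
    rintro _ ⟨x, hx, rfl⟩
    exact mul_nonneg (mul_nonneg hc hx.1) (sub_nonneg.2 hx.2)
  have himage_convex : Convex ℝ (q '' Icc 0 1) :=
    convex_iff_ordConnected.2 <| isPreconnected_iff_ordConnected.1 <|
      isPreconnected_Icc.image q (by fun_prop)
  exact (Real.strictConcaveOn_sqrt.concaveOn.subset himage_nonneg himage_convex).comp hq
    fun _ _ _ _ h ↦ Real.sqrt_le_sqrt h

lemma monotoneOn_min_one_add_sqrt_mul_one_sub {c a : ℝ} (hc : 0 ≤ c) (ha : 0 ≤ a) :
    MonotoneOn (fun x : ℝ ↦ min 1 (x + √(c * x * (1 - x)) + a)) (Icc 0 1) := by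
  refine ConcaveOn.monotoneOn_min_of_le_right ?_ (by simpa using ha)
  exact ((concaveOn_id (convex_Icc 0 1)).add (concaveOn_sqrt_mul_one_sub hc)).add
    (concaveOn_const a (convex_Icc 0 1))

/-- For every β ≥ 0, both shading functions
`S_F^β(x) = min(1, x + √(8β·x·(1−x)) + 7β)` and
`S_E^β(x) = min(1, x + √(2β·x·(1−x)) + 4β)` are nondecreasing on `[0,1]`. -/
theorem shade_functions_monotone (β : ℝ) (hβ : 0 ≤ β)
    (x x' : ℝ) (hx : 0 ≤ x) (hxx' : x ≤ x') (hx' : x' ≤ 1) :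
    min 1 (x + Real.sqrt (8 * β * x * (1 - x)) + 7 * β) ≤
      min 1 (x' + Real.sqrt (8 * β * x' * (1 - x')) + 7 * β) ∧
    min 1 (x + Real.sqrt (2 * β * x * (1 - x)) + 4 * β) ≤
      min 1 (x' + Real.sqrt (2 * β * x' * (1 - x')) + 4 * β) := by
  have hxI : x ∈ Icc (0 : ℝ) 1 := ⟨hx, hxx'.trans hx'⟩
  have hx'I : x' ∈ Icc (0 : ℝ) 1 := ⟨hx.trans hxx', hx'⟩
  exact ⟨monotoneOn_min_one_add_sqrt_mul_one_sub (by positivity) (by positivity) hxI hx'I hxx',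
    monotoneOn_min_one_add_sqrt_mul_one_sub (by positivity) (by positivity) hxI hx'I hxx'⟩
end

section
/- Let β > 0 and let x, y ∈ [0,1] satisfy |x − y| ≤ √(2β·y·(1−y)) + β. Then (1) min(1, x + √(2β·x·(1−x)) + 4β) ≥ y, and (2) min(1, x + √(2β·x·(1−x)) + 4β) ≤ min(1, y + √(8β·y·(1−y)) + 7β). -/
/-!
Write `a = √(2β·y(1−y))` and `b = √(2β·x(1−x))`. Since `x(1−x) − y(1−y) = (x−y)(1−x−y)`, the
variance proxies differ by at most `|x − y| ≤ a + β`, so `|b² − a²| ≤ 2β(a + β)`. Completing the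
square turns this into `a ≤ b + 3β` and `b ≤ a + 2β`. Then `y ≤ x + a + β ≤ x + b + 4β`, and
`x + b + 4β ≤ (y + a + β) + (a + 2β) + 4β = y + √(8β·y(1−y)) + 7β`.
-/

open Real

lemma abs_mul_one_sub_sub_mul_one_sub_le {x y : ℝ} (hx : x ∈ Set.Icc (0 : ℝ) 1)
    (hy : y ∈ Set.Icc (0 : ℝ) 1) : |x * (1 - x) - y * (1 - y)| ≤ |x - y| := by
  have hxy : |1 - x - y| ≤ 1 := abs_le.2 ⟨by linarith [hx.2, hy.2], by linarith [hx.1, hy.1]⟩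
  calc |x * (1 - x) - y * (1 - y)| = |x - y| * |1 - x - y| := by rw [← abs_mul]; ring_nf
    _ ≤ |x - y| := mul_le_of_le_one_right (abs_nonneg _) hxy

lemma le_add_three_mul_of_sq_le {a b β : ℝ} (hβ : 0 ≤ β) (ha : 0 ≤ a) (hb : 0 ≤ b)
    (h : a ^ 2 ≤ b ^ 2 + 2 * β * (a + β)) : a ≤ b + 3 * β := by
  nlinarith [sq_nonneg (a - b - 3 * β), mul_nonneg hβ ha, mul_nonneg hβ hb, mul_nonneg ha hb]

lemma le_add_two_mul_of_sq_le {a b β : ℝ} (hβ : 0 ≤ β) (ha : 0 ≤ a)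
    (h : b ^ 2 ≤ a ^ 2 + 2 * β * (a + β)) : b ≤ a + 2 * β :=
  abs_le_of_sq_le_sq' (by nlinarith [mul_nonneg hβ ha]) (by positivity) |>.2

/-- If `x` (the empirical CDF value) and `y` (the true CDF value) in `[0,1]` satisfy
`|x − y| ≤ √(2β·y·(1−y)) + β`, then `S_E^β(x) ≥ y` and `S_E^β(x) ≤ S_F^β(y)`, where
`S_E^β(x) = min(1, x + √(2β·x·(1−x)) + 4β)` and `S_F^β(y) = min(1, y + √(8β·y·(1−y)) + 7β)`. -/
theorem shaded_empirical_sandwich (β : ℝ) (hβ : 0 < β)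
    (x y : ℝ) (hx : x ∈ Set.Icc (0 : ℝ) 1) (hy : y ∈ Set.Icc (0 : ℝ) 1)
    (hclose : |x - y| ≤ Real.sqrt (2 * β * y * (1 - y)) + β) :
    y ≤ min 1 (x + Real.sqrt (2 * β * x * (1 - x)) + 4 * β) ∧
    min 1 (x + Real.sqrt (2 * β * x * (1 - x)) + 4 * β) ≤
      min 1 (y + Real.sqrt (8 * β * y * (1 - y)) + 7 * β) := by
  set a := √(2 * β * y * (1 - y))
  set b := √(2 * β * x * (1 - x))
  have ha : a ^ 2 = 2 * β * (y * (1 - y)) := by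
    rw [sq_sqrt (by nlinarith [mul_nonneg hβ.le (mul_nonneg hy.1 (sub_nonneg.2 hy.2))])]; ring
  have hb : b ^ 2 = 2 * β * (x * (1 - x)) := by
    rw [sq_sqrt (by nlinarith [mul_nonneg hβ.le (mul_nonneg hx.1 (sub_nonneg.2 hx.2))])]; ring
  have hvar : |b ^ 2 - a ^ 2| ≤ 2 * β * (a + β) := by
    rw [ha, hb, ← mul_sub, abs_mul, abs_of_pos (by positivity)]
    exact mul_le_mul_of_nonneg_left
      ((abs_mul_one_sub_sub_mul_one_sub_le hx hy).trans hclose) (by positivity)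
  obtain ⟨hab₁, hab₂⟩ := abs_le.1 hvar
  have ha_le : a ≤ b + 3 * β :=
    le_add_three_mul_of_sq_le hβ.le (sqrt_nonneg _) (sqrt_nonneg _) (by linarith)
  have hb_le : b ≤ a + 2 * β := le_add_two_mul_of_sq_le hβ.le (sqrt_nonneg _) (by linarith)
  have h8 : √(8 * β * y * (1 - y)) = 2 * a := by
    rw [show 8 * β * y * (1 - y) = 2 ^ 2 * (2 * β * y * (1 - y)) by ring,
      sqrt_mul (by positivity), sqrt_sq zero_le_two]
  obtain ⟨hxy₁, hxy₂⟩ := abs_le.1 hclose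
  rw [h8]
  exact ⟨le_min hy.2 (by linarith), min_le_min_left _ (by linarith)⟩
end

section
/- Let F₁, F₂, Ẽ₁, Ẽ₂, F̃₁, F̃₂ : ℝ → [0,1] be functions with x ↦ 1 − F₂(x), x ↦ 1 − Ẽ₂(x), x ↦ 1 − F̃₂(x) measurable and integrable on (0,∞), and suppose F_i(v) ≤ Ẽ_i(v) ≤ F̃_i(v) for all v ≥ 0 and i ∈ {1,2}. If r* ≥ 0 satisfies AR(r*, Ẽ₁, Ẽ₂) = sup_{r ≥ 0} AR(r, Ẽ₁, Ẽ₂), then AR(r*, F₁, F₂) ≥ sup_{r ≥ 0} AR(r, F̃₁, F̃₂). -/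
/-! Optimality of `r*` on the middle instance sandwiches the two revenues: for every reserve
`r ≥ 0`, `AR(r, F̃) ≤ AR(r, Ẽ) ≤ AR(r*, Ẽ) ≤ AR(r*, F)`, where the outer inequalities hold
because, at a nonnegative reserve, `AR` is antitone in both CDFs. -/

open MeasureTheory

/-- The Anonymous Reserve revenue for reserve `r`, when `F1`, `F2` are the CDFs of the
highest and second-highest bid: `AR(r, F1, F2) = r·(1 − F1(r)) + ∫_r^∞ (1 − F2(x)) dx`. -/
noncomputable def AR (r : ℝ) (F1 F2 : ℝ → ℝ) : ℝ :=
  r * (1 - F1 r) + ∫ x in Set.Ioi r, (1 - F2 x)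

open Set

theorem AR_le_AR_of_le {r : ℝ} (hr : 0 ≤ r) {A1 A2 B1 B2 : ℝ → ℝ}
    (hA : IntegrableOn (fun x => 1 - A2 x) (Ioi r))
    (hB : IntegrableOn (fun x => 1 - B2 x) (Ioi r))
    (h1 : B1 r ≤ A1 r) (h2 : ∀ v ∈ Ioi r, B2 v ≤ A2 v) :
    AR r A1 A2 ≤ AR r B1 B2 := by
  unfold AR
  gcongr r * (1 - ?_) + ?_
  exact setIntegral_mono_on hA hB measurableSet_Ioi fun v hv => by linarith [h2 v hv]

theorem AR_le_AR_of_le_on_Ici {r : ℝ} (hr : 0 ≤ r) {A1 A2 B1 B2 : ℝ → ℝ}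
    (hA : IntegrableOn (fun x => 1 - A2 x) (Ioi 0))
    (hB : IntegrableOn (fun x => 1 - B2 x) (Ioi 0))
    (h1 : ∀ v, 0 ≤ v → B1 v ≤ A1 v) (h2 : ∀ v, 0 ≤ v → B2 v ≤ A2 v) :
    AR r A1 A2 ≤ AR r B1 B2 :=
  AR_le_AR_of_le hr (hA.mono_set (Ioi_subset_Ioi hr)) (hB.mono_set (Ioi_subset_Ioi hr))
    (h1 r hr) fun v hv => h2 v (hr.trans hv.le)

theorem ar_empirical_reserve_guarantee_general
    (F1 F2 E1 E2 G1 G2 : ℝ → ℝ)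
    (hintF2 : IntegrableOn (fun x => 1 - F2 x) (Set.Ioi 0))
    (hintE2 : IntegrableOn (fun x => 1 - E2 x) (Set.Ioi 0))
    (hintG2 : IntegrableOn (fun x => 1 - G2 x) (Set.Ioi 0))
    (hdom1 : ∀ v, 0 ≤ v → F1 v ≤ E1 v ∧ E1 v ≤ G1 v)
    (hdom2 : ∀ v, 0 ≤ v → F2 v ≤ E2 v ∧ E2 v ≤ G2 v)
    (rstar : ℝ) (hrstar : 0 ≤ rstar)
    (hopt : ((AR rstar E1 E2 : ℝ) : EReal) =
      ⨆ r : ℝ, ⨆ _ : 0 ≤ r, ((AR r E1 E2 : ℝ) : EReal)) :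
    (⨆ r : ℝ, ⨆ _ : 0 ≤ r, ((AR r G1 G2 : ℝ) : EReal)) ≤
      ((AR rstar F1 F2 : ℝ) : EReal) := by
  refine iSup₂_le fun r hr => ?_
  calc ((AR r G1 G2 : ℝ) : EReal)
      ≤ AR r E1 E2 := EReal.coe_le_coe_iff.2 <|
        AR_le_AR_of_le_on_Ici hr hintG2 hintE2 (fun v hv => (hdom1 v hv).2)
          fun v hv => (hdom2 v hv).2
    _ ≤ AR rstar E1 E2 :=
        hopt ▸ le_iSup₂ (f := fun r (_ : 0 ≤ r) => ((AR r E1 E2 : ℝ) : EReal)) r hr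
    _ ≤ AR rstar F1 F2 := EReal.coe_le_coe_iff.2 <|
        AR_le_AR_of_le_on_Ici hrstar hintE2 hintF2 (fun v hv => (hdom1 v hv).1)
          fun v hv => (hdom2 v hv).1

/-- If `F_i ≤ Ẽ_i ≤ F̃_i` pointwise on `[0,∞)` (true instance, shaded empirical instance,
shaded true instance), and `r*` is an optimal reserve for the shaded empirical instance,
then the revenue of `r*` on the true instance is at least the optimal Anonymous Reserve
revenue of the shaded true instance. -/
theorem ar_empirical_reserve_guarantee
    (F1 F2 E1 E2 G1 G2 : ℝ → ℝ)
    (hF1 : ∀ v, F1 v ∈ Set.Icc (0 : ℝ) 1) (hF2 : ∀ v, F2 v ∈ Set.Icc (0 : ℝ) 1)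
    (hE1 : ∀ v, E1 v ∈ Set.Icc (0 : ℝ) 1) (hE2 : ∀ v, E2 v ∈ Set.Icc (0 : ℝ) 1)
    (hG1 : ∀ v, G1 v ∈ Set.Icc (0 : ℝ) 1) (hG2 : ∀ v, G2 v ∈ Set.Icc (0 : ℝ) 1)
    (hmeasF2 : Measurable fun x => 1 - F2 x)
    (hmeasE2 : Measurable fun x => 1 - E2 x)
    (hmeasG2 : Measurable fun x => 1 - G2 x)
    (hintF2 : IntegrableOn (fun x => 1 - F2 x) (Set.Ioi 0))
    (hintE2 : IntegrableOn (fun x => 1 - E2 x) (Set.Ioi 0))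
    (hintG2 : IntegrableOn (fun x => 1 - G2 x) (Set.Ioi 0))
    (hdom1 : ∀ v, 0 ≤ v → F1 v ≤ E1 v ∧ E1 v ≤ G1 v)
    (hdom2 : ∀ v, 0 ≤ v → F2 v ≤ E2 v ∧ E2 v ≤ G2 v)
    (rstar : ℝ) (hrstar : 0 ≤ rstar)
    (hopt : ((AR rstar E1 E2 : ℝ) : EReal) =
      ⨆ r : ℝ, ⨆ _ : 0 ≤ r, ((AR r E1 E2 : ℝ) : EReal)) :
    (⨆ r : ℝ, ⨆ _ : 0 ≤ r, ((AR r G1 G2 : ℝ) : EReal)) ≤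
      ((AR rstar F1 F2 : ℝ) : EReal) :=
  ar_empirical_reserve_guarantee_general F1 F2 E1 E2 G1 G2 hintF2 hintE2 hintG2 hdom1 hdom2 rstar
    hrstar hopt
end

section
/- Let ε ∈ (0,1) and 0 ≤ β ≤ ε²/12. Let F₁, F₂ : ℝ → [0,1] be measurable with F₂(x) = 1 for all x > 1, and define F̃_i(v) = min(1, F_i(v) + √(8β·F_i(v)·(1−F_i(v))) + 7β) for i ∈ {1,2}. Then for every reserve r ∈ [0,1], AR(r, F₁, F₂) − AR(r, F̃₁, F̃₂) ≤ ε; consequently sup_{r ∈ [0,1]} AR(r, F̃₁, F̃₂) ≥ sup_{r ∈ [0,1]} AR(r, F₁, F₂) − ε. -/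
/-! Shading a CDF by `S^β` raises it pointwise by at most `√(2β) + 7β ≤ ε` (as `x(1 - x) ≤ 1/4`),
and it leaves the value `1` unchanged, so the shaded second-highest bid is still supported on
`[0,1]`. On such instances `AR` is a posted price term plus an integral over `[r,1]`, so raising
both CDFs by at most `c` lowers the revenue by at most `r·c + (1 - r)·c = c`. -/

open MeasureTheory Set

/-- The shading function `S_F^β`. -/
noncomputable def shading (β x : ℝ) : ℝ :=
  min 1 (x + √(8 * β * x * (1 - x)) + 7 * β)

section Shading

variable {β x : ℝ}

theorem continuous_shading (β : ℝ) : Continuous (shading β) := by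
  unfold shading; fun_prop

theorem shading_le_one : shading β x ≤ 1 :=
  min_le_left _ _

theorem le_shading (hβ : 0 ≤ β) (hx : x ≤ 1) : x ≤ shading β x :=
  le_min hx (by have := Real.sqrt_nonneg (8 * β * x * (1 - x)); linarith)

theorem shading_mem_Icc (hβ : 0 ≤ β) (hx : x ∈ Icc 0 1) : shading β x ∈ Icc 0 1 :=
  ⟨hx.1.trans (le_shading hβ hx.2), shading_le_one⟩

theorem shading_one (hβ : 0 ≤ β) : shading β 1 = 1 := by
  simp [shading, hβ]

theorem shading_le_add (hβ : 0 ≤ β) (x : ℝ) : shading β x ≤ x + (√(2 * β) + 7 * β) := by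
  have hvar : 8 * β * x * (1 - x) ≤ 2 * β := by nlinarith [sq_nonneg (2 * x - 1)]
  have := Real.sqrt_le_sqrt hvar
  exact (min_le_right _ _).trans (by linarith)

end Shading

theorem sqrt_two_mul_add_le {ε β : ℝ} (hε0 : 0 < ε) (hε1 : ε ≤ 1) (hβ : β ≤ ε ^ 2 / 12) :
    √(2 * β) + 7 * β ≤ ε := by
  have hsqrt : √(2 * β) ≤ 5 * ε / 12 := by
    rw [Real.sqrt_le_left (by positivity)]
    nlinarith
  nlinarith

theorem intervalIntegrable_one_sub {F : ℝ → ℝ} (hm : Measurable F) (hF : ∀ x, F x ∈ Icc 0 1)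
    (a b : ℝ) : IntervalIntegrable (fun x => 1 - F x) volume a b := by
  refine (intervalIntegrable_const (c := (1 : ℝ))).mono_fun (by fun_prop) (ae_of_all _ fun x => ?_)
  simp only [Real.norm_eq_abs, abs_one, abs_le]
  constructor <;> linarith [(hF x).1, (hF x).2]

section AR

variable {r b : ℝ} {F1 F2 G1 G2 : ℝ → ℝ}

theorem AR_eq_intervalIntegral (hrb : r ≤ b) (hF2 : ∀ x, b < x → F2 x = 1) :
    AR r F1 F2 = r * (1 - F1 r) + ∫ x in r..b, (1 - F2 x) := by
  rw [AR, intervalIntegral.integral_of_le hrb,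
    setIntegral_eq_of_subset_of_forall_sdiff_eq_zero measurableSet_Ioi Ioc_subset_Ioi_self]
  rintro x ⟨hxr, hxb⟩
  have hbx : b < x := lt_of_not_ge fun h => hxb ⟨hxr, h⟩
  simp [hF2 x hbx]

theorem AR_le (hr0 : 0 ≤ r) (hrb : r ≤ b) (hF1 : 0 ≤ F1 r) (hF2 : ∀ x, F2 x ∈ Icc 0 1)
    (hF2b : ∀ x, b < x → F2 x = 1) : AR r F1 F2 ≤ b := by
  have hint : ∫ x in r..b, (1 - F2 x) ≤ 1 * |b - r| := by
    refine (Real.le_norm_self _).trans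
      (intervalIntegral.norm_integral_le_of_norm_le_const fun x _ => ?_)
    rw [Real.norm_eq_abs, abs_le]
    constructor <;> linarith [(hF2 x).1, (hF2 x).2]
  rw [abs_of_nonneg (sub_nonneg.2 hrb)] at hint
  rw [AR_eq_intervalIntegral hrb hF2b]
  nlinarith

theorem AR_sub_AR_le {c : ℝ} (hr0 : 0 ≤ r) (hrb : r ≤ b)
    (hF2i : IntervalIntegrable (fun x => 1 - F2 x) volume r b)
    (hG2i : IntervalIntegrable (fun x => 1 - G2 x) volume r b)
    (hF2b : ∀ x, b < x → F2 x = 1) (hG2b : ∀ x, b < x → G2 x = 1)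
    (h1 : G1 r ≤ F1 r + c) (h2 : ∀ x ∈ Icc r b, G2 x ≤ F2 x + c) :
    AR r F1 F2 - AR r G1 G2 ≤ c * b := by
  have hint : ∫ x in r..b, (1 - F2 x) ≤ ∫ x in r..b, ((1 - G2 x) + c) :=
    intervalIntegral.integral_mono_on hrb hF2i (hG2i.add intervalIntegrable_const)
      fun x hx => by linarith [h2 x hx]
  rw [intervalIntegral.integral_add hG2i intervalIntegrable_const,
    intervalIntegral.integral_const, smul_eq_mul] at hint
  rw [AR_eq_intervalIntegral hrb hF2b, AR_eq_intervalIntegral hrb hG2b]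
  nlinarith

end AR

theorem ciSup_sub_le_ciSup {ι : Type*} [Nonempty ι] {f g : ι → ℝ} {ε : ℝ}
    (hg : BddAbove (range g)) (h : ∀ i, f i - g i ≤ ε) : (⨆ i, f i) - ε ≤ ⨆ i, g i :=
  sub_le_iff_le_add.2 <| ciSup_le fun i => by linarith [h i, le_ciSup hg i]

theorem ar_smoothness_zero_one_support_general
    (ε β : ℝ) (hε : ε ∈ Set.Ioo (0 : ℝ) 1) (hβ0 : 0 ≤ β) (hβ : β ≤ ε ^ 2 / 12)
    (F1 F2 : ℝ → ℝ)
    (hF1 : ∀ v, F1 v ∈ Set.Icc (0 : ℝ) 1) (hF2 : ∀ v, F2 v ∈ Set.Icc (0 : ℝ) 1)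
    (hmeas2 : Measurable F2)
    (hsupp : ∀ x, 1 < x → F2 x = 1)
    (G1 G2 : ℝ → ℝ)
    (hG1 : ∀ v, G1 v = min 1 (F1 v + Real.sqrt (8 * β * F1 v * (1 - F1 v)) + 7 * β))
    (hG2 : ∀ v, G2 v = min 1 (F2 v + Real.sqrt (8 * β * F2 v * (1 - F2 v)) + 7 * β)) :
    (∀ r ∈ Set.Icc (0 : ℝ) 1, AR r F1 F2 - AR r G1 G2 ≤ ε) ∧
    (⨆ r : Set.Icc (0 : ℝ) 1, AR r F1 F2) - ε ≤ ⨆ r : Set.Icc (0 : ℝ) 1, AR r G1 G2 := by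
  obtain rfl : G1 = fun v => shading β (F1 v) := funext hG1
  obtain rfl : G2 = fun v => shading β (F2 v) := funext hG2
  have hG2mem : ∀ x, shading β (F2 x) ∈ Icc 0 1 := fun x => shading_mem_Icc hβ0 (hF2 x)
  have hG2supp : ∀ x, 1 < x → shading β (F2 x) = 1 := fun x hx => by
    rw [hsupp x hx, shading_one hβ0]
  have hG2meas : Measurable fun x => shading β (F2 x) :=
    (continuous_shading β).measurable.comp hmeas2
  have hpoint : ∀ r ∈ Icc (0 : ℝ) 1,
      AR r F1 F2 - AR r (fun v => shading β (F1 v)) (fun v => shading β (F2 v)) ≤ ε := by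
    rintro r ⟨hr0, hr1⟩
    calc _ ≤ (√(2 * β) + 7 * β) * 1 :=
          AR_sub_AR_le hr0 hr1 (intervalIntegrable_one_sub hmeas2 hF2 r 1)
            (intervalIntegrable_one_sub hG2meas hG2mem r 1) hsupp hG2supp
            (shading_le_add hβ0 _) fun x _ => shading_le_add hβ0 _
      _ ≤ ε := by rw [mul_one]; exact sqrt_two_mul_add_le hε.1 hε.2.le hβ
  have : Nonempty (Icc (0 : ℝ) 1) := ⟨⟨0, left_mem_Icc.2 zero_le_one⟩⟩
  refine ⟨hpoint, ciSup_sub_le_ciSup ⟨1, ?_⟩ fun r => hpoint r r.2⟩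
  rintro _ ⟨r, rfl⟩
  exact AR_le r.2.1 r.2.2 ((hF1 r).1.trans (le_shading hβ0 (hF1 r).2)) hG2mem hG2supp

/-- Revenue smoothness in the `[0,1]`-support setting: with `β ≤ ε²/12`, shading the
instance by `S_F^β` decreases the Anonymous Reserve revenue of every reserve `r ∈ [0,1]`
by at most `ε` additively, hence the optimal shaded revenue is at least the optimal
revenue minus `ε`. -/
theorem ar_smoothness_zero_one_support
    (ε β : ℝ) (hε : ε ∈ Set.Ioo (0 : ℝ) 1) (hβ0 : 0 ≤ β) (hβ : β ≤ ε ^ 2 / 12)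
    (F1 F2 : ℝ → ℝ)
    (hF1 : ∀ v, F1 v ∈ Set.Icc (0 : ℝ) 1) (hF2 : ∀ v, F2 v ∈ Set.Icc (0 : ℝ) 1)
    (hmeas1 : Measurable F1) (hmeas2 : Measurable F2)
    (hsupp : ∀ x, 1 < x → F2 x = 1)
    (G1 G2 : ℝ → ℝ)
    (hG1 : ∀ v, G1 v = min 1 (F1 v + Real.sqrt (8 * β * F1 v * (1 - F1 v)) + 7 * β))
    (hG2 : ∀ v, G2 v = min 1 (F2 v + Real.sqrt (8 * β * F2 v * (1 - F2 v)) + 7 * β)) :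
    (∀ r ∈ Set.Icc (0 : ℝ) 1, AR r F1 F2 - AR r G1 G2 ≤ ε) ∧
    (⨆ r : Set.Icc (0 : ℝ) 1, AR r F1 F2) - ε ≤ ⨆ r : Set.Icc (0 : ℝ) 1, AR r G1 G2 :=
  ar_smoothness_zero_one_support_general ε β hε hβ0 hβ F1 F2 hF1 hF2 hmeas2 hsupp G1 G2 hG1 hG2
end

section
/- Let β ≥ 0, H ≥ 1, r ≥ 0 and B ≥ r. Let F₁, F₂ : ℝ → [0,1] be measurable with x ↦ 1 − F₂(x) integrable on (r, ∞), with F₁(r) ≤ (H−1)/H and F₂(x) ≤ (H−1)/H for all x ∈ [r, B). Then r·√(8β·F₁(r)·(1−F₁(r))) + ∫_r^B √(8β·F₂(x)·(1−F₂(x))) dx ≤ √(8βH) · ( r·(1 − F₁(r)) + ∫_r^∞ (1 − F₂(x)) dx ). -/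
/-!
If `F ≤ (H - 1) / H` then `F ≤ H (1 - F)`, hence `a F (1 - F) ≤ a H (1 - F)²` and
`√(a F (1 - F)) ≤ √(a H) (1 - F)`. Applied at `r` this bounds the first term; integrated over
`[r, B]` it bounds the second, and the integral of `1 - F₂ ≥ 0` only grows from `(r, B)` to `(r, ∞)`.
-/

open MeasureTheory Set

theorem sqrt_mul_mul_one_sub_le {a H F : ℝ} (ha : 0 ≤ a) (hH : 0 < H)
    (hF : F ≤ (H - 1) / H) :
    √(a * F * (1 - F)) ≤ √(a * H) * (1 - F) := by
  have hF_sub_nonneg : 0 ≤ 1 - F := sub_nonneg.2 (hF.trans ((div_le_one hH).2 (by linarith)))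
  have hFH : F ≤ H * (1 - F) := by
    have := (le_div_iff₀ hH).mp hF
    linarith
  have hsq : a * F * (1 - F) ≤ a * H * ((1 - F) * (1 - F)) := by
    have := mul_le_mul_of_nonneg_left (mul_le_mul_of_nonneg_right hFH hF_sub_nonneg) ha
    linarith
  calc √(a * F * (1 - F)) ≤ √(a * H * ((1 - F) * (1 - F))) := Real.sqrt_le_sqrt hsq
    _ = √(a * H) * (1 - F) := by
      rw [Real.sqrt_mul (by positivity), Real.sqrt_mul_self hF_sub_nonneg]

theorem intervalIntegral_le_integral_Ioi {f g : ℝ → ℝ} {a b : ℝ} (hab : a ≤ b)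
    (hf : ∀ x ∈ Ioo a b, 0 ≤ f x) (hfg : ∀ x ∈ Ioo a b, f x ≤ g x)
    (hg : IntegrableOn g (Ioi a)) (hg0 : ∀ x ∈ Ioi a, 0 ≤ g x) :
    ∫ x in a..b, f x ≤ ∫ x in Ioi a, g x := by
  rw [intervalIntegral.integral_of_le hab, integral_Ioc_eq_integral_Ioo]
  calc ∫ x in Ioo a b, f x ≤ ∫ x in Ioo a b, g x :=
        integral_mono_of_nonneg (ae_restrict_of_forall_mem measurableSet_Ioo hf)
          (hg.mono_set Ioo_subset_Ioi_self) (ae_restrict_of_forall_mem measurableSet_Ioo hfg)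
    _ ≤ ∫ x in Ioi a, g x :=
        setIntegral_mono_set hg (ae_restrict_of_forall_mem measurableSet_Ioi hg0)
          Ioo_subset_Ioi_self.eventuallyLE

theorem ar_first_second_term_bound_general
    (β H r B : ℝ) (hβ : 0 ≤ β) (hH : 1 ≤ H) (hr : 0 ≤ r) (hB : r ≤ B)
    (F1 F2 : ℝ → ℝ)
    (hF2 : ∀ v, F2 v ∈ Set.Icc (0 : ℝ) 1)
    (hint : IntegrableOn (fun x => 1 - F2 x) (Set.Ioi r))
    (hF1r : F1 r ≤ (H - 1) / H)
    (hF2B : ∀ x ∈ Set.Ico r B, F2 x ≤ (H - 1) / H) :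
    r * Real.sqrt (8 * β * F1 r * (1 - F1 r)) +
        ∫ x in r..B, Real.sqrt (8 * β * F2 x * (1 - F2 x)) ≤
      Real.sqrt (8 * β * H) * (r * (1 - F1 r) + ∫ x in Set.Ioi r, (1 - F2 x)) := by
  have h8β : 0 ≤ 8 * β := by positivity
  have hH0 : 0 < H := by linarith
  set c := √(8 * β * H)
  have hfirst : r * √(8 * β * F1 r * (1 - F1 r)) ≤ r * (c * (1 - F1 r)) :=
    mul_le_mul_of_nonneg_left (sqrt_mul_mul_one_sub_le h8β hH0 hF1r) hr
  have hsecond : ∫ x in r..B, √(8 * β * F2 x * (1 - F2 x)) ≤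
      ∫ x in Ioi r, c * (1 - F2 x) :=
    intervalIntegral_le_integral_Ioi hB (fun _ _ => Real.sqrt_nonneg _)
      (fun x hx => sqrt_mul_mul_one_sub_le h8β hH0 (hF2B x (Ioo_subset_Ico_self hx)))
      (hint.const_mul c) (fun x _ => mul_nonneg (Real.sqrt_nonneg _) (sub_nonneg.2 (hF2 x).2))
  calc _ ≤ r * (c * (1 - F1 r)) + ∫ x in Ioi r, c * (1 - F2 x) := add_le_add hfirst hsecond
    _ = c * (r * (1 - F1 r) + ∫ x in Ioi r, (1 - F2 x)) := by
      rw [integral_const_mul]; ring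

/-- The `[1,H]`-support smoothness estimate (Lemma 5.1 of the paper): if
`F1(r) ≤ (H−1)/H` and `F2 ≤ (H−1)/H` on `[r, B)`, then
`r·√(8β·F1(r)·(1−F1(r))) + ∫_r^B √(8β·F2(x)·(1−F2(x))) dx ≤ √(8βH)·AR(r, F1, F2)`. -/
theorem ar_first_second_term_bound
    (β H r B : ℝ) (hβ : 0 ≤ β) (hH : 1 ≤ H) (hr : 0 ≤ r) (hB : r ≤ B)
    (F1 F2 : ℝ → ℝ)
    (hF1 : ∀ v, F1 v ∈ Set.Icc (0 : ℝ) 1) (hF2 : ∀ v, F2 v ∈ Set.Icc (0 : ℝ) 1)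
    (hmeas1 : Measurable F1) (hmeas2 : Measurable F2)
    (hint : IntegrableOn (fun x => 1 - F2 x) (Set.Ioi r))
    (hF1r : F1 r ≤ (H - 1) / H)
    (hF2B : ∀ x ∈ Set.Ico r B, F2 x ≤ (H - 1) / H) :
    r * Real.sqrt (8 * β * F1 r * (1 - F1 r)) +
        ∫ x in r..B, Real.sqrt (8 * β * F2 x * (1 - F2 x)) ≤
      Real.sqrt (8 * β * H) * (r * (1 - F1 r) + ∫ x in Set.Ioi r, (1 - F2 x)) :=
  ar_first_second_term_bound_general β H r B hβ hH hr hB F1 F2 hF2 hint hF1r hF2B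
end

section
/- Let H ≥ 1, ε ∈ (0,1) and 0 < β ≤ ε²/(48H). Let F₁, F₂ : ℝ → [0,1] be nondecreasing with F₁(v) ≤ F₂(v) for all v, F₁(v) = F₂(v) = 0 for v ≤ 1, and F₁(v) = F₂(v) = 1 for v > H. Define F̃_i(v) = min(1, F_i(v) + √(8β·F_i(v)·(1−F_i(v))) + 7β). Then for every reserve r ∈ [1, H] with F₁(r) ≤ (H−1)/H and AR(r, F₁, F₂) ≥ 1, one has AR(r, F̃₁, F̃₂) ≥ (1 − ε)·AR(r, F₁, F₂). (In particular this applies to an optimal reserve, since AR(1, F₁, F₂) ≥ 1 and some optimal reserve r satisfies F₁(r) ≤ (H−1)/H.) -/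
open MeasureTheory

open Set

/-!
Shading moves a CDF value `x` up by at most `√(8βx(1-x)) + 7β`, and AM-GM with a free parameter
`t > 0` bounds this by `(4β/t)(1 - x) + t/2 + 7β`. The term proportional to `1 - x` costs the
fraction `4β/t` of the revenue, while the additive term acts on the posted price `r` and on the
integral over `(r, H]` only, costing at most `(t/2 + 7β)·H`. The choice `t = ε·AR/(4H)` together
with `βH ≤ ε²/48` and `AR ≥ 1` makes the total loss at most `ε·AR`.
-/

/-- The shading function `S_F^β`. -/
noncomputable def shade (β x : ℝ) : ℝ :=
  min 1 (x + Real.sqrt (8 * β * x * (1 - x)) + 7 * β)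

lemma continuous_shade (β : ℝ) : Continuous (shade β) := by
  unfold shade
  fun_prop

lemma shade_le_one (β x : ℝ) : shade β x ≤ 1 :=
  min_le_left _ _

lemma le_shade {β x : ℝ} (hβ : 0 ≤ β) (hx : x ≤ 1) : x ≤ shade β x :=
  le_min hx (by linarith [Real.sqrt_nonneg (8 * β * x * (1 - x))])

lemma shade_one {β : ℝ} (hβ : 0 ≤ β) : shade β 1 = 1 :=
  le_antisymm (shade_le_one β 1) (le_shade hβ le_rfl)

lemma sqrt_le_div_add_half {u t : ℝ} (hu : 0 ≤ u) (ht : 0 < t) :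
    Real.sqrt u ≤ u / (2 * t) + t / 2 := by
  rw [Real.sqrt_le_left (by positivity)]
  have : (u / (2 * t) + t / 2) ^ 2 - u = (u / (2 * t) - t / 2) ^ 2 := by
    field_simp
    ring
  nlinarith [sq_nonneg (u / (2 * t) - t / 2)]

lemma shade_sub_le {β t x : ℝ} (hβ : 0 ≤ β) (ht : 0 < t) (hx0 : 0 ≤ x) (hx1 : x ≤ 1) :
    shade β x - x ≤ 4 * β / t * (1 - x) + (t / 2 + 7 * β) := by
  have hu : 0 ≤ 8 * β * x * (1 - x) := by
    have : 0 ≤ 1 - x := by linarith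
    positivity
  have hamgm := sqrt_le_div_add_half hu ht
  have hx : 8 * β * x * (1 - x) / (2 * t) = 4 * β / t * (1 - x) - 4 * β / t * (1 - x) ^ 2 := by
    field_simp
    ring
  have hsq : 0 ≤ 4 * β / t * (1 - x) ^ 2 := by positivity
  have : shade β x ≤ x + Real.sqrt (8 * β * x * (1 - x)) + 7 * β := min_le_right _ _
  linarith

lemma integrableOn_Ioi_one_sub {F : ℝ → ℝ} {r H : ℝ} (hmeas : Measurable F)
    (hF : ∀ x, F x ∈ Icc (0 : ℝ) 1) (hhigh : ∀ x, H < x → F x = 1) :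
    IntegrableOn (fun x => 1 - F x) (Ioi r) := by
  have hbounded : IntegrableOn (fun x => 1 - F x) (Ioc r H) := by
    refine Measure.integrableOn_of_bounded (M := 1) measure_Ioc_lt_top.ne
      (measurable_const.sub hmeas).aestronglyMeasurable (ae_of_all _ fun x => ?_)
    rw [Real.norm_eq_abs, abs_le]
    constructor <;> linarith [(hF x).1, (hF x).2]
  refine hbounded.of_forall_sdiff_eq_zero measurableSet_Ioi ?_
  rintro x ⟨hxr, hx⟩
  rw [hhigh x (lt_of_not_ge fun hxH => hx ⟨hxr, hxH⟩), sub_self]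

lemma AR_sub_AR_le_s9 {r H c d : ℝ} {F1 F2 G1 G2 : ℝ → ℝ} (hr : 0 ≤ r) (hrH : r ≤ H)
    (hF2 : IntegrableOn (fun x => 1 - F2 x) (Ioi r))
    (hG2 : IntegrableOn (fun x => 1 - G2 x) (Ioi r))
    (h1 : G1 r - F1 r ≤ c * (1 - F1 r) + d)
    (h2 : ∀ x ∈ Ioc r H, G2 x - F2 x ≤ c * (1 - F2 x) + d)
    (h3 : ∀ x, H < x → G2 x - F2 x ≤ c * (1 - F2 x)) :
    AR r F1 F2 - AR r G1 G2 ≤ c * AR r F1 F2 + d * H := by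
  have hind : IntegrableOn ((Ioc r H).indicator fun _ => d) (Ioi r) :=
    (integrableOn_const measure_Ioc_lt_top.ne).integrable_indicator measurableSet_Ioc
      |>.integrableOn
  have hpointwise : ∀ x ∈ Ioi r, (1 - F2 x) - (1 - G2 x)
      ≤ c * (1 - F2 x) + (Ioc r H).indicator (fun _ => d) x := by
    intro x hx
    by_cases hxH : x ≤ H
    · have hmem : x ∈ Ioc r H := ⟨hx, hxH⟩
      rw [indicator_of_mem hmem]
      linarith [h2 x hmem]
    · rw [indicator_of_notMem fun hmem => hxH hmem.2]
      linarith [h3 x (lt_of_not_ge hxH)]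
  have hindicator : ∫ x in Ioi r, (Ioc r H).indicator (fun _ => d) x = d * (H - r) := by
    rw [setIntegral_indicator measurableSet_Ioc,
      inter_eq_self_of_subset_right Ioc_subset_Ioi_self, setIntegral_const,
      Real.volume_real_Ioc_of_le hrH, smul_eq_mul, mul_comm]
  have hintegral : (∫ x in Ioi r, (1 - F2 x)) - ∫ x in Ioi r, (1 - G2 x)
      ≤ c * (∫ x in Ioi r, (1 - F2 x)) + d * (H - r) := by
    have hmono : ∫ x in Ioi r, ((1 - F2 x) - (1 - G2 x))
        ≤ ∫ x in Ioi r, (c * (1 - F2 x) + (Ioc r H).indicator (fun _ => d) x) :=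
      setIntegral_mono_on (hF2.sub hG2) ((hF2.const_mul c).add hind) measurableSet_Ioi hpointwise
    rwa [integral_sub hF2 hG2, integral_add (hF2.const_mul c) hind, integral_const_mul,
      hindicator] at hmono
  have hprice : r * (1 - F1 r) - r * (1 - G1 r) ≤ c * (r * (1 - F1 r)) + d * r := by
    nlinarith [mul_le_mul_of_nonneg_left h1 hr]
  unfold AR
  linarith

lemma shading_loss_le {A H β ε t : ℝ} (hA : 1 ≤ A) (hH : 0 < H)
    (hε : ε ∈ Ioo 0 1) (hβH : β * H ≤ ε ^ 2 / 48) (ht : t = ε * A / (4 * H)) :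
    4 * β / t * A + (t / 2 + 7 * β) * H ≤ ε * A := by
  obtain ⟨hε0, hε1⟩ := hε
  subst ht
  have hA0 : 0 < A := by linarith
  have hexpand : 4 * β / (ε * A / (4 * H)) * A + (ε * A / (4 * H) / 2 + 7 * β) * H
      = 16 * (β * H) / ε + ε * A / 8 + 7 * (β * H) := by
    field_simp
    ring
  have hfirst : 16 * (β * H) / ε ≤ ε * A / 3 := by
    rw [div_le_iff₀ hε0]
    nlinarith [mul_le_mul_of_nonneg_left hA (sq_nonneg ε)]
  have hlast : 7 * (β * H) ≤ 7 * (ε * A) / 48 := by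
    nlinarith [mul_le_mul_of_nonneg_left (hε1.le.trans hA) hε0.le]
  rw [hexpand]
  linarith [mul_pos hε0 hA0]

theorem ar_smoothness_one_H_support_general
    (H ε β : ℝ) (hH : 1 ≤ H) (hε : ε ∈ Set.Ioo (0 : ℝ) 1)
    (hβ0 : 0 < β) (hβ : β ≤ ε ^ 2 / (48 * H))
    (F1 F2 : ℝ → ℝ) (hmono2 : Monotone F2)
    (hF1 : ∀ v, F1 v ∈ Set.Icc (0 : ℝ) 1) (hF2 : ∀ v, F2 v ∈ Set.Icc (0 : ℝ) 1)
    (hhigh : ∀ v, H < v → F1 v = 1 ∧ F2 v = 1)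
    (G1 G2 : ℝ → ℝ)
    (hG1 : ∀ v, G1 v = min 1 (F1 v + Real.sqrt (8 * β * F1 v * (1 - F1 v)) + 7 * β))
    (hG2 : ∀ v, G2 v = min 1 (F2 v + Real.sqrt (8 * β * F2 v * (1 - F2 v)) + 7 * β)) :
    ∀ r ∈ Set.Icc (1 : ℝ) H, F1 r ≤ (H - 1) / H → 1 ≤ AR r F1 F2 →
      (1 - ε) * AR r F1 F2 ≤ AR r G1 G2 := by
  intro r ⟨hr1, hrH⟩ _ hAR
  obtain rfl : G1 = shade β ∘ F1 := funext hG1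
  obtain rfl : G2 = shade β ∘ F2 := funext hG2
  set t := ε * AR r F1 F2 / (4 * H)
  have ht : 0 < t := by have := hε.1; positivity
  have hshade x (hx : x ∈ Icc (0 : ℝ) 1) := shade_sub_le hβ0.le ht hx.1 hx.2
  have hF2high x (hx : H < x) : F2 x = 1 := (hhigh x hx).2
  have hG2high x (hx : H < x) : shade β (F2 x) = 1 := by rw [hF2high x hx, shade_one hβ0.le]
  have hG2mem x : shade β (F2 x) ∈ Icc (0 : ℝ) 1 :=
    ⟨(hF2 x).1.trans (le_shade hβ0.le (hF2 x).2), shade_le_one β _⟩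
  have hloss : AR r F1 F2 - AR r (shade β ∘ F1) (shade β ∘ F2)
      ≤ 4 * β / t * AR r F1 F2 + (t / 2 + 7 * β) * H :=
    AR_sub_AR_le_s9 (by linarith) hrH (integrableOn_Ioi_one_sub hmono2.measurable hF2 hF2high)
      (integrableOn_Ioi_one_sub ((continuous_shade β).measurable.comp hmono2.measurable)
        hG2mem hG2high)
      (hshade _ (hF1 r)) (fun x _ => hshade _ (hF2 x))
      fun x hx => by rw [Function.comp_apply, hG2high x hx, hF2high x hx]; simp
  have hβH : β * H ≤ ε ^ 2 / 48 := by
    rw [le_div_iff₀ (by positivity)] at hβ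
    linarith
  linarith [shading_loss_le (t := t) hAR (by linarith) hε hβH rfl]

/-- Revenue smoothness in the `[1,H]`-support setting: with `0 < β ≤ ε²/(48H)`, for any
reserve `r ∈ [1,H]` with `F1(r) ≤ (H−1)/H` and `AR(r, F1, F2) ≥ 1`, shading by `S_F^β`
preserves a `(1−ε)` fraction of the revenue. -/
theorem ar_smoothness_one_H_support
    (H ε β : ℝ) (hH : 1 ≤ H) (hε : ε ∈ Set.Ioo (0 : ℝ) 1)
    (hβ0 : 0 < β) (hβ : β ≤ ε ^ 2 / (48 * H))
    (F1 F2 : ℝ → ℝ) (hmono1 : Monotone F1) (hmono2 : Monotone F2)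
    (hF1 : ∀ v, F1 v ∈ Set.Icc (0 : ℝ) 1) (hF2 : ∀ v, F2 v ∈ Set.Icc (0 : ℝ) 1)
    (hdom : ∀ v, F1 v ≤ F2 v)
    (hlow : ∀ v, v ≤ 1 → F1 v = 0 ∧ F2 v = 0)
    (hhigh : ∀ v, H < v → F1 v = 1 ∧ F2 v = 1)
    (G1 G2 : ℝ → ℝ)
    (hG1 : ∀ v, G1 v = min 1 (F1 v + Real.sqrt (8 * β * F1 v * (1 - F1 v)) + 7 * β))
    (hG2 : ∀ v, G2 v = min 1 (F2 v + Real.sqrt (8 * β * F2 v * (1 - F2 v)) + 7 * β)) :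
    ∀ r ∈ Set.Icc (1 : ℝ) H, F1 r ≤ (H - 1) / H → 1 ≤ AR r F1 F2 →
      (1 - ε) * AR r F1 F2 ≤ AR r G1 G2 :=
  ar_smoothness_one_H_support_general H ε β hH hε hβ0 hβ F1 F2 hmono2 hF1 hF2 hhigh G1 G2 hG1 hG2
end

section
/- Let (Ω, 𝓕, ℙ) be a probability space and let A₁, …, A_n be independent events. Let N(ω) = #{ j : ω ∈ A_j }. Then ℙ({ω : N(ω) ≥ 2}) ≤ ( ℙ({ω : N(ω) ≥ 1}) )². -/
/-!
Split the event "at least one `A j` occurs" according to the first index that occurs: these are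
the disjoint sets `disjointed A j`. If at least two events occur, then for that first index `j`
some later `A l` occurs as well. Now `disjointed A j` depends only on the events up to `j` and
`⋃ l > j, A l` only on those after `j`, so by independence their intersection has probability
`P (disjointed A j) * P (⋃ l > j, A l) ≤ P (disjointed A j) * P (⋃ i, A i)`; summing over `j`
gives `P (⋃ i, A i) ^ 2`.
-/

open MeasureTheory ProbabilityTheory Set

lemma setOf_one_le_ncard_eq_iUnion {Ω ι : Type*} [Finite ι] (A : ι → Set Ω) :
    {ω | 1 ≤ {j | ω ∈ A j}.ncard} = ⋃ j, A j := by
  ext ω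
  rw [mem_ofPred_eq, Nat.one_le_iff_ne_zero, ← Nat.pos_iff_ne_zero, ncard_pos, mem_iUnion]
  rfl

section LinearOrder

variable {Ω ι : Type*} [LinearOrder ι] [LocallyFiniteOrderBot ι] {A : ι → Set Ω}

lemma setOf_two_le_ncard_subset_iUnion_disjointed_inter [Finite ι] (A : ι → Set Ω) :
    {ω | 2 ≤ {j | ω ∈ A j}.ncard} ⊆ ⋃ j, disjointed A j ∩ ⋃ l > j, A l := by
  intro ω hω
  obtain ⟨i, k, hi, hk, hik⟩ := (one_lt_ncard_iff).1 hω
  wlog hlt : i < k generalizing i k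
  · exact this k i hk hi hik.symm (hik.lt_or_gt.resolve_left hlt)
  obtain ⟨j, hji, hj⟩ : ∃ j ≤ i, ω ∈ disjointed A j := by
    have hi' := le_partialSups A i hi
    rw [← biUnion_Iic_disjointed] at hi'
    simpa only [mem_iUnion, exists_prop, Finset.mem_Iic] using hi'
  exact mem_iUnion.2 ⟨j, hj, mem_biUnion (hji.trans_lt hlt) hk⟩

variable [MeasurableSpace Ω] {P : Measure Ω}

namespace ProbabilityTheory

lemma iIndepSet.measure_disjointed_inter_iUnion_gt [Countable ι]
    (hmeas : ∀ i, MeasurableSet (A i)) (hA : iIndepSet A P) (j : ι) :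
    P (disjointed A j ∩ ⋃ l > j, A l) = P (disjointed A j) * P (⋃ l > j, A l) := by
  have hIndep := hA.indep_generateFrom_of_disjoint hmeas (Iic j) (Ioi j)
    (Iic_disjoint_Ioi le_rfl)
  refine (hIndep.indepSet_of_measurableSet ?_ ?_).measure_inter_eq_mul
  · rw [disjointed_eq_inter_compl]
    refine .inter (.basic _ ⟨j, le_rfl, rfl⟩) (.iInter fun i => .iInter fun hi => .compl ?_)
    exact .basic _ ⟨i, hi.le, rfl⟩
  · exact .iUnion fun l => .iUnion fun hl => .basic _ ⟨l, hl, rfl⟩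

lemma iIndepSet.measure_iUnion_disjointed_inter_iUnion_gt_le_sq [Fintype ι]
    (hmeas : ∀ i, MeasurableSet (A i)) (hA : iIndepSet A P) :
    P (⋃ j, disjointed A j ∩ ⋃ l > j, A l) ≤ P (⋃ i, A i) ^ 2 := by
  have hsum : ∑ j, P (disjointed A j) = P (⋃ i, A i) := by
    have hmeas' j : MeasurableSet (disjointed A j) :=
      disjointedRec (fun _ i ht => ht.diff (hmeas i)) (hmeas j)
    rw [← iUnion_disjointed, measure_iUnion (disjoint_disjointed A) hmeas', tsum_fintype]
  calc P (⋃ j, disjointed A j ∩ ⋃ l > j, A l)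
      ≤ ∑ j, P (disjointed A j ∩ ⋃ l > j, A l) := measure_iUnion_fintype_le P _
    _ = ∑ j, P (disjointed A j) * P (⋃ l > j, A l) :=
        Finset.sum_congr rfl fun j _ => hA.measure_disjointed_inter_iUnion_gt hmeas j
    _ ≤ ∑ j, P (disjointed A j) * P (⋃ i, A i) := Finset.sum_le_sum fun j _ =>
        mul_le_mul_right (measure_mono (iUnion₂_subset fun l _ => subset_iUnion A l)) _
    _ = P (⋃ i, A i) ^ 2 := by rw [← Finset.sum_mul, hsum, sq]

end ProbabilityTheory

end LinearOrder

theorem indep_at_least_two_le_sq_general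
    {Ω : Type*} [MeasurableSpace Ω] (P : Measure Ω)
    (n : ℕ) (A : Fin n → Set Ω) (hmeas : ∀ j, MeasurableSet (A j))
    (hindep : iIndepSet A P) :
    P {ω | 2 ≤ Set.ncard {j : Fin n | ω ∈ A j}} ≤
      (P {ω | 1 ≤ Set.ncard {j : Fin n | ω ∈ A j}}) ^ 2 := by
  rw [setOf_one_le_ncard_eq_iUnion]
  exact (measure_mono (setOf_two_le_ncard_subset_iUnion_disjointed_inter A)).trans
    (hindep.measure_iUnion_disjointed_inter_iUnion_gt_le_sq hmeas)

/-- For independent events `A₁, …, A_n`, the probability that at least two of them occur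
is at most the square of the probability that at least one of them occurs. (Applied to
`A_j = {bidder j's value ≥ v}`, this gives `1 − F₍₂₎(v) ≤ (1 − F₍₁₎(v))²` for the
highest and second-highest order statistics of independent bids.) -/
theorem indep_at_least_two_le_sq
    {Ω : Type*} [MeasurableSpace Ω] (P : Measure Ω) [IsProbabilityMeasure P]
    (n : ℕ) (A : Fin n → Set Ω) (hmeas : ∀ j, MeasurableSet (A j))
    (hindep : iIndepSet A P) :
    P {ω | 2 ≤ Set.ncard {j : Fin n | ω ∈ A j}} ≤
      (P {ω | 1 ≤ Set.ncard {j : Fin n | ω ∈ A j}}) ^ 2 :=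
  indep_at_least_two_le_sq_general P n A hmeas hindep
end

section
/- Let ε ∈ (0,1) and let F₂, F₂* : ℝ → [0,1] be measurable with 0 ≤ F₂*(x) − F₂(x) ≤ (ε/4)² for all x ≥ 0 and F₂(x) ≥ 1 − 1/x² for all x > 0. Then ∫_0^∞ (F₂*(x) − F₂(x)) dx ≤ ε/2; consequently, for every F₁ : ℝ → ℝ and every reserve r ≥ 0, AR(r, F₁, F₂) − AR(r, F₁, F₂*) ≤ ε/2. -/
/-!
Write `g = F₂* − F₂`. On `(0, ∞)` we have `0 ≤ g ≤ (ε/4)²` and, since `F₂* ≤ 1`,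
`g ≤ 1 − F₂ ≤ 1/x²`. Splitting at `a = 4/ε`, the constant bound gives `∫_0^a g ≤ a (ε/4)² = ε/4`
and the tail bound gives `∫_a^∞ g ≤ 1/a = ε/4`. The two revenues differ only in the integral
term, by `∫_r^∞ g ≤ ∫_0^∞ g` because `g ≥ 0`.
-/

open MeasureTheory

open Set

lemma one_div_sq_eq_rpow_neg_two (x : ℝ) : 1 / x ^ 2 = x ^ (-2 : ℝ) := by
  rw [show (-2 : ℝ) = ((-2 : ℤ) : ℝ) by norm_num, Real.rpow_intCast, zpow_neg, one_div]
  norm_cast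

lemma integrableOn_Ioi_one_div_sq {a : ℝ} (ha : 0 < a) :
    IntegrableOn (fun x : ℝ => 1 / x ^ 2) (Ioi a) := by
  simpa only [one_div_sq_eq_rpow_neg_two] using integrableOn_Ioi_rpow_of_lt (by norm_num) ha

lemma integral_Ioi_one_div_sq {a : ℝ} (ha : 0 < a) : ∫ x in Ioi a, 1 / x ^ 2 = 1 / a := by
  simp only [one_div_sq_eq_rpow_neg_two, integral_Ioi_rpow_of_lt (by norm_num : (-2 : ℝ) < -1) ha]
  norm_num [Real.rpow_neg_one]

lemma integrableOn_Ioi_zero_of_le_of_le_one_div_sq {h : ℝ → ℝ} (hm : AEStronglyMeasurable h)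
    {C : ℝ} (h0 : ∀ x > 0, 0 ≤ h x) (hC : ∀ x > 0, h x ≤ C)
    (htail : ∀ x > 0, h x ≤ 1 / x ^ 2) :
    IntegrableOn h (Ioi 0) := by
  rw [← Ioc_union_Ioi_eq_Ioi zero_le_one]
  refine IntegrableOn.union ?_ ?_
  · refine Measure.integrableOn_of_bounded (M := C) measure_Ioc_lt_top.ne hm ?_
    filter_upwards [ae_restrict_mem measurableSet_Ioc] with x hx
    rw [Real.norm_of_nonneg (h0 x hx.1)]
    exact hC x hx.1
  · refine (integrableOn_Ioi_one_div_sq zero_lt_one).mono' hm.restrict ?_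
    filter_upwards [ae_restrict_mem measurableSet_Ioi] with x hx
    have hx0 : 0 < x := zero_lt_one.trans hx
    rw [Real.norm_of_nonneg (h0 x hx0)]
    exact htail x hx0

lemma setIntegral_Ioi_zero_le_of_le_of_le_one_div_sq {g : ℝ → ℝ} (hg : IntegrableOn g (Ioi 0))
    {δ a : ℝ} (ha : 0 < a) (hδ : ∀ x > 0, g x ≤ δ) (htail : ∀ x > 0, g x ≤ 1 / x ^ 2) :
    ∫ x in Ioi 0, g x ≤ a * δ + 1 / a := by
  have hg_head : IntegrableOn g (Ioc 0 a) := hg.mono_set Ioc_subset_Ioi_self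
  have hg_tail : IntegrableOn g (Ioi a) := hg.mono_set (Ioi_subset_Ioi ha.le)
  rw [← Ioc_union_Ioi_eq_Ioi ha.le,
    setIntegral_union (Ioc_disjoint_Ioi le_rfl) measurableSet_Ioi hg_head hg_tail]
  refine add_le_add ?_ ?_
  · calc ∫ x in Ioc 0 a, g x ≤ ∫ _ in Ioc 0 a, δ :=
          setIntegral_mono_on hg_head (integrableOn_const measure_Ioc_lt_top.ne)
            measurableSet_Ioc fun x hx => hδ x hx.1
      _ = a * δ := by
          rw [setIntegral_const, Real.volume_real_Ioc_of_le ha.le, sub_zero, smul_eq_mul]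
  · calc ∫ x in Ioi a, g x ≤ ∫ x in Ioi a, 1 / x ^ 2 :=
          setIntegral_mono_on hg_tail (integrableOn_Ioi_one_div_sq ha) measurableSet_Ioi
            fun x hx => htail x (ha.trans hx)
      _ = 1 / a := integral_Ioi_one_div_sq ha

lemma AR_sub_AR {r : ℝ} {F1 F2 G2 : ℝ → ℝ} (hF : IntegrableOn (fun x => 1 - F2 x) (Ioi r))
    (hG : IntegrableOn (fun x => 1 - G2 x) (Ioi r)) :
    AR r F1 F2 - AR r F1 G2 = ∫ x in Ioi r, (G2 x - F2 x) := by
  rw [AR, AR, add_sub_add_left_eq_sub, ← integral_sub hF hG]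
  congr 1 with x
  ring

theorem ar_second_highest_truncation_loss_general
    (ε : ℝ) (hε : ε ∈ Set.Ioo (0 : ℝ) 1)
    (F2 F2star : ℝ → ℝ)
    (hF2star : ∀ v, F2star v ∈ Set.Icc (0 : ℝ) 1)
    (hmeas2 : Measurable F2) (hmeas2star : Measurable F2star)
    (hgap : ∀ x, 0 ≤ x → F2star x - F2 x ∈ Set.Icc (0 : ℝ) ((ε / 4) ^ 2))
    (htail : ∀ x, 0 < x → 1 - 1 / x ^ 2 ≤ F2 x) :
    (∫ x in Set.Ioi (0 : ℝ), (F2star x - F2 x)) ≤ ε / 2 ∧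
    ∀ (F1 : ℝ → ℝ) (r : ℝ), 0 ≤ r → AR r F1 F2 - AR r F1 F2star ≤ ε / 2 := by
  have hgap_nonneg : ∀ x > 0, 0 ≤ F2star x - F2 x := fun x hx => (hgap x hx.le).1
  have hgap_le : ∀ x > 0, F2star x - F2 x ≤ (ε / 4) ^ 2 := fun x hx => (hgap x hx.le).2
  have hgap_tail : ∀ x > 0, F2star x - F2 x ≤ 1 / x ^ 2 := fun x hx => by
    linarith [htail x hx, (hF2star x).2]
  have hstar_tail : ∀ x > 0, 1 - F2star x ≤ 1 / x ^ 2 := fun x hx => by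
    linarith [htail x hx, hgap_nonneg x hx]
  have hint_gap : IntegrableOn (fun x => F2star x - F2 x) (Ioi 0) :=
    integrableOn_Ioi_zero_of_le_of_le_one_div_sq (hmeas2star.sub hmeas2).aestronglyMeasurable
      hgap_nonneg hgap_le hgap_tail
  have hint_star : IntegrableOn (fun x => 1 - F2star x) (Ioi 0) :=
    integrableOn_Ioi_zero_of_le_of_le_one_div_sq (C := 1)
      (measurable_const.sub hmeas2star).aestronglyMeasurable
      (fun x _ => by linarith [(hF2star x).2]) (fun x _ => by linarith [(hF2star x).1])
      hstar_tail
  have hint : IntegrableOn (fun x => 1 - F2 x) (Ioi 0) := by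
    refine (hint_star.add hint_gap).congr_fun (fun x _ => ?_) measurableSet_Ioi
    simp only [Pi.add_apply]
    ring
  have hbound : ∫ x in Ioi 0, (F2star x - F2 x) ≤ ε / 2 := by
    have hε0 : 0 < ε := hε.1
    calc _ ≤ 4 / ε * (ε / 4) ^ 2 + 1 / (4 / ε) :=
          setIntegral_Ioi_zero_le_of_le_of_le_one_div_sq hint_gap (by positivity) hgap_le hgap_tail
      _ = ε / 2 := by field_simp; ring
  refine ⟨hbound, fun F1 r hr => ?_⟩
  have hsub : Ioi r ⊆ Ioi 0 := Ioi_subset_Ioi hr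
  rw [AR_sub_AR (hint.mono_set hsub) (hint_star.mono_set hsub)]
  calc _ ≤ ∫ x in Ioi 0, (F2star x - F2 x) :=
        setIntegral_mono_set hint_gap
          (ae_restrict_of_forall_mem measurableSet_Ioi hgap_nonneg) hsub.eventuallyLE
    _ ≤ ε / 2 := hbound

/-- Truncating the second-highest CDF at quantile `1 − (ε/4)²` loses at most `ε/2`
revenue: if `0 ≤ F2* − F2 ≤ (ε/4)²` pointwise and `F2(x) ≥ 1 − 1/x²`, then
`∫_0^∞ (F2* − F2) ≤ ε/2`, and for every highest CDF `F1` and reserve `r ≥ 0`,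
`AR(r, F1, F2) − AR(r, F1, F2*) ≤ ε/2`. -/
theorem ar_second_highest_truncation_loss
    (ε : ℝ) (hε : ε ∈ Set.Ioo (0 : ℝ) 1)
    (F2 F2star : ℝ → ℝ)
    (hF2 : ∀ v, F2 v ∈ Set.Icc (0 : ℝ) 1) (hF2star : ∀ v, F2star v ∈ Set.Icc (0 : ℝ) 1)
    (hmeas2 : Measurable F2) (hmeas2star : Measurable F2star)
    (hgap : ∀ x, 0 ≤ x → F2star x - F2 x ∈ Set.Icc (0 : ℝ) ((ε / 4) ^ 2))
    (htail : ∀ x, 0 < x → 1 - 1 / x ^ 2 ≤ F2 x) :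
    (∫ x in Set.Ioi (0 : ℝ), (F2star x - F2 x)) ≤ ε / 2 ∧
    ∀ (F1 : ℝ → ℝ) (r : ℝ), 0 ≤ r → AR r F1 F2 - AR r F1 F2star ≤ ε / 2 :=
  ar_second_highest_truncation_loss_general ε hε F2 F2star hF2star hmeas2 hmeas2star hgap htail
end

section
/- Let n ≥ 1, a₁, …, a_n > 0 and u > 0, and define P(t) = ∏_{j=1}^n (1 − e^{−a_j·t}) for t > 0. Then for every v ≥ u, ln P(v) ≥ (1 − P(u))^{v/u − 1} · ln P(u); equivalently, P(v) ≥ P(u)^{(1 − P(u))^{v/u − 1}}. -/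
open Finset Real

/-!
With `x_j = e^{-a_j u}` and `s = v / u` one has `P(v) = ∏ (1 - x_j ^ s)`. Concavity of `log` makes
`log (1 - t) / t` decreasing on `(0, 1)`, whence `x ^ (s - 1) * log (1 - x) ≤ log (1 - x ^ s)`.
Since every `x_j ≤ 1 - P(u)` and `log (1 - x_j) ≤ 0`, summing over `j` bounds `log P(v)`.
-/

lemma antitoneOn_log_one_sub_div : AntitoneOn (fun t : ℝ => log (1 - t) / t) (Set.Ioo 0 1) := by
  intro y ⟨hy0, hy1⟩ x ⟨hx0, hx1⟩ hyx
  have hslope := strictConcaveOn_log_Ioi.concaveOn.antitoneOn_slope_lt (Set.mem_Ioi.2 one_pos)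
    ⟨Set.mem_Ioi.2 (sub_pos.2 hx1), by linarith⟩ ⟨Set.mem_Ioi.2 (sub_pos.2 hy1), by linarith⟩
    (sub_le_sub_left hyx 1)
  simp only [slope_def_field, log_one, sub_zero, sub_sub_cancel_left, div_neg] at hslope
  linarith

lemma rpow_sub_one_mul_log_one_sub_le {x s : ℝ} (hx0 : 0 < x) (hx1 : x < 1) (hs : 1 ≤ s) :
    x ^ (s - 1) * log (1 - x) ≤ log (1 - x ^ s) := by
  have hxs0 : 0 < x ^ s := rpow_pos_of_pos hx0 s
  have hxsx : x ^ s ≤ x := rpow_le_self_of_le_one hx0.le hx1.le hs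
  have hslope := antitoneOn_log_one_sub_div ⟨hxs0, hxsx.trans_lt hx1⟩ ⟨hx0, hx1⟩ hxsx
  have hsplit : x ^ s = x ^ (s - 1) * x := by
    rw [← rpow_add_one hx0.ne', sub_add_cancel]
  calc x ^ (s - 1) * log (1 - x) = x ^ s * (log (1 - x) / x) := by
        rw [hsplit]; field_simp
    _ ≤ x ^ s * (log (1 - x ^ s) / x ^ s) := mul_le_mul_of_nonneg_left hslope hxs0.le
    _ = log (1 - x ^ s) := mul_div_cancel₀ _ hxs0.ne'

lemma prod_one_sub_le_one_sub {ι : Type*} [Fintype ι] {x : ι → ℝ} (hx0 : ∀ j, 0 ≤ x j)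
    (hx1 : ∀ j, x j ≤ 1) (j : ι) : ∏ k, (1 - x k) ≤ 1 - x j := by
  simpa using prod_le_prod_of_subset_of_le_one (subset_univ {j})
    (fun k _ => sub_nonneg.2 (hx1 k)) (fun k _ _ => sub_le_self 1 (hx0 k))

lemma one_sub_prod_rpow_mul_log_prod_le {ι : Type*} [Fintype ι] {x : ι → ℝ}
    (hx0 : ∀ j, 0 < x j) (hx1 : ∀ j, x j < 1) {s : ℝ} (hs : 1 ≤ s) :
    (1 - ∏ j, (1 - x j)) ^ (s - 1) * log (∏ j, (1 - x j)) ≤ log (∏ j, (1 - x j ^ s)) := by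
  have hfac : ∀ j, 1 - x j ≠ 0 := fun j => (sub_pos.2 (hx1 j)).ne'
  have hfac_rpow : ∀ j, 1 - x j ^ s ≠ 0 := fun j =>
    (sub_pos.2 (rpow_lt_one (hx0 j).le (hx1 j) (zero_lt_one.trans_le hs))).ne'
  rw [log_prod (fun j _ => hfac j), log_prod (fun j _ => hfac_rpow j), mul_sum]
  refine sum_le_sum fun j _ => ?_
  have hxj : x j ≤ 1 - ∏ k, (1 - x k) := by
    linarith [prod_one_sub_le_one_sub (fun k => (hx0 k).le) (fun k => (hx1 k).le) j]
  calc (1 - ∏ k, (1 - x k)) ^ (s - 1) * log (1 - x j)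
      ≤ x j ^ (s - 1) * log (1 - x j) :=
        mul_le_mul_of_nonpos_right (rpow_le_rpow (hx0 j).le hxj (sub_nonneg.2 hs))
          (log_nonpos (sub_nonneg.2 (hx1 j).le) (sub_le_self 1 (hx0 j).le))
    _ ≤ log (1 - x j ^ s) := rpow_sub_one_mul_log_one_sub_le (hx0 j) (hx1 j) hs

theorem exponential_max_cdf_tail_general
    (n : ℕ) (a : Fin n → ℝ) (ha : ∀ j, 0 < a j)
    (u : ℝ) (hu : 0 < u)
    (P : ℝ → ℝ) (hP : ∀ t, P t = ∏ j, (1 - Real.exp (-(a j) * t))) :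
    ∀ v, u ≤ v →
      ((1 - P u) ^ (v / u - 1) * Real.log (P u) ≤ Real.log (P v) ∧
        P u ^ ((1 - P u) ^ (v / u - 1)) ≤ P v) := by
  intro v hv
  set x : Fin n → ℝ := fun j => exp (-(a j) * u)
  have hx0 : ∀ j, 0 < x j := fun j => exp_pos _
  have hx1 : ∀ j, x j < 1 := fun j =>
    exp_lt_one_iff.2 (mul_neg_of_neg_of_pos (neg_neg_of_pos (ha j)) hu)
  have hPv : P v = ∏ j, (1 - x j ^ (v / u)) := by
    rw [hP v]
    refine prod_congr rfl fun j _ => ?_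
    rw [← exp_mul, mul_assoc, mul_div_cancel₀ v hu.ne']
  have hlog : (1 - P u) ^ (v / u - 1) * log (P u) ≤ log (P v) := by
    rw [hPv, hP u]
    exact one_sub_prod_rpow_mul_log_prod_le hx0 hx1 ((one_le_div hu).2 hv)
  have hPu_pos : 0 < P u := (hP u).symm ▸ prod_pos fun j _ => sub_pos.2 (hx1 j)
  have hPv_pos : 0 < P v := hPv ▸ prod_pos fun j _ =>
    sub_pos.2 (rpow_lt_one (hx0 j).le (hx1 j) (div_pos (hu.trans_le hv) hu))
  exact ⟨hlog, (rpow_le_iff_le_log hPu_pos hPv_pos).2 hlog⟩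

/-- Core inequality for the MHR extreme value theorem: for the CDF
`P(t) = ∏_j (1 − e^{−a_j t})` of the maximum of `n` independent exponentials with rates
`a_j > 0`, for every `v ≥ u > 0` one has
`ln P(v) ≥ (1 − P(u))^{v/u − 1} · ln P(u)`, i.e. `P(v) ≥ P(u)^{(1 − P(u))^{v/u − 1}}`. -/
theorem exponential_max_cdf_tail
    (n : ℕ) (hn : 1 ≤ n) (a : Fin n → ℝ) (ha : ∀ j, 0 < a j)
    (u : ℝ) (hu : 0 < u)
    (P : ℝ → ℝ) (hP : ∀ t, P t = ∏ j, (1 - Real.exp (-(a j) * t))) :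
    ∀ v, u ≤ v →
      ((1 - P u) ^ (v / u - 1) * Real.log (P u) ≤ Real.log (P v) ∧
        P u ^ ((1 - P u) ^ (v / u - 1)) ≤ P v) :=
  exponential_max_cdf_tail_general n a ha u hu P hP
end

section
/- Let F₁, …, F_n : [0,∞) → [0,1) be nondecreasing functions with F_j(0) = 0 such that v ↦ ln(1 − F_j(v)) is concave on [0,∞) for each j. Let F⁽¹⁾(v) = ∏_{j=1}^n F_j(v), and suppose v·(1 − F⁽¹⁾(v)) ≤ 1 for all v ≥ 0. Then F⁽¹⁾(v) ≥ 1 − (3/2)·e^{−v/6} for every v ≥ e. -/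
open Finset

/-! Normalization at `v = e` gives `∏ F_j(e) ≥ 1 - 1/e`, hence
`∑ (1 - F_j(e)) ≤ -log ∏ F_j(e) ≤ 1/(e - 1)`. As `log (1 - F_j)` is concave and vanishes at `0`,
its slope from the origin decreases, so `1 - F_j(v) ≤ (1 - F_j(e)) ^ (v/e)` for `v ≥ e`. The union
bound and `∑ x_j ^ p ≤ (∑ x_j) ^ p` for `p ≥ 1` then give
`1 - F⁽¹⁾(v) ≤ (e - 1) ^ (-v/e) ≤ e ^ (-v/6)`. -/

theorem Finset.one_sub_prod_le_sum_one_sub {ι : Type*} (s : Finset ι) {f : ι → ℝ}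
    (h0 : ∀ i ∈ s, 0 ≤ f i) (h1 : ∀ i ∈ s, f i ≤ 1) :
    1 - ∏ i ∈ s, f i ≤ ∑ i ∈ s, (1 - f i) := by
  induction s using Finset.cons_induction with
  | empty => simp
  | cons a s _ ih =>
    simp only [forall_mem_cons] at h0 h1
    rw [prod_cons, sum_cons]
    have hprod_le_one : ∏ i ∈ s, f i ≤ 1 := prod_le_one h0.2 h1.2
    nlinarith [ih h0.2 h1.2]

theorem Real.sum_rpow_le_rpow_sum {ι : Type*} (s : Finset ι) {f : ι → ℝ} {p : ℝ}
    (hf : ∀ i ∈ s, 0 ≤ f i) (hp : 1 ≤ p) :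
    ∑ i ∈ s, f i ^ p ≤ (∑ i ∈ s, f i) ^ p := by
  induction s using Finset.cons_induction with
  | empty => simp [Real.zero_rpow (by linarith : p ≠ 0)]
  | cons a s _ ih =>
    simp only [forall_mem_cons] at hf
    rw [sum_cons, sum_cons]
    calc f a ^ p + ∑ i ∈ s, f i ^ p ≤ f a ^ p + (∑ i ∈ s, f i) ^ p := by gcongr; exact ih hf.2
      _ ≤ (f a + ∑ i ∈ s, f i) ^ p := Real.add_rpow_le_rpow_add hf.1 (sum_nonneg hf.2) hp

theorem Finset.sum_one_sub_le_inv_prod_sub_one {ι : Type*} (s : Finset ι) {f : ι → ℝ}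
    (hf : ∀ i ∈ s, 0 < f i) :
    ∑ i ∈ s, (1 - f i) ≤ (∏ i ∈ s, f i)⁻¹ - 1 :=
  calc ∑ i ∈ s, (1 - f i) ≤ ∑ i ∈ s, -Real.log (f i) :=
        sum_le_sum fun i hi => by linarith [Real.log_le_sub_one_of_pos (hf i hi)]
    _ = -Real.log (∏ i ∈ s, f i) := by
        rw [Real.log_prod fun i hi => (hf i hi).ne', sum_neg_distrib]
    _ ≤ (∏ i ∈ s, f i)⁻¹ - 1 := by
        linarith [Real.one_sub_inv_le_log_of_pos (prod_pos hf)]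

theorem ConcaveOn.le_div_mul_of_map_zero {g : ℝ → ℝ} (hg : ConcaveOn ℝ (Set.Ici 0) g)
    (hg0 : g 0 = 0) {a b : ℝ} (ha : 0 < a) (hab : a ≤ b) :
    g b ≤ b / a * g a := by
  have hb : 0 < b := ha.trans_le hab
  have hslope : g b / b ≤ g a / a := by
    simpa only [slope_def_field, hg0, sub_zero] using hg.slope_anti Set.self_mem_Ici
      ⟨Set.mem_Ici.2 ha.le, ha.ne'⟩ ⟨Set.mem_Ici.2 hb.le, hb.ne'⟩ hab
  calc g b ≤ b * (g a / a) := (div_le_iff₀' hb).1 hslope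
    _ = b / a * g a := by ring

theorem one_sub_le_rpow_of_concaveOn_log_one_sub {F : ℝ → ℝ}
    (hF : ConcaveOn ℝ (Set.Ici 0) fun v => Real.log (1 - F v)) (hF0 : F 0 = 0)
    {a b : ℝ} (hFa : F a < 1) (hFb : F b < 1) (ha : 0 < a) (hab : a ≤ b) :
    1 - F b ≤ (1 - F a) ^ (b / a) := by
  have hlog := hF.le_div_mul_of_map_zero (by simp [hF0]) ha hab
  rw [Real.rpow_def_of_pos (sub_pos.2 hFa), ← Real.exp_log (sub_pos.2 hFb), mul_comm]
  exact Real.exp_le_exp.2 hlog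

theorem inv_exp_one_sub_one_le_exp : (Real.exp 1 - 1)⁻¹ ≤ Real.exp (-Real.exp 1 / 6) := by
  set e := Real.exp 1
  have he₁ : 2.7182818283 < e := Real.exp_one_gt_d9
  have he₂ : e < 2.7182818286 := Real.exp_one_lt_d9
  calc (e - 1)⁻¹ ≤ (-e / 12 + 1) ^ 2 := by
        rw [inv_le_iff_one_le_mul₀ (by linarith)]
        nlinarith
    _ ≤ Real.exp (-e / 12) ^ 2 :=
        pow_le_pow_left₀ (by linarith) (Real.add_one_le_exp _) 2
    _ = Real.exp (-e / 6) := by rw [← Real.exp_nat_mul]; ring_nf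

theorem one_sub_prod_le_inv_sub_one_rpow {ι : Type*} [Fintype ι] {F : ι → ℝ → ℝ}
    (hrange : ∀ j, ∀ v, 0 ≤ v → F j v ∈ Set.Ico (0 : ℝ) 1) (hzero : ∀ j, F j 0 = 0)
    (hmhr : ∀ j, ConcaveOn ℝ (Set.Ici 0) (fun v => Real.log (1 - F j v)))
    {a b : ℝ} (ha : 1 < a) (hnorm : a * (1 - ∏ j, F j a) ≤ 1) (hab : a ≤ b) :
    1 - ∏ j, F j b ≤ (a - 1)⁻¹ ^ (b / a) := by
  have ha₀ : 0 < a := by linarith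
  have hprod : (a - 1) / a ≤ ∏ j, F j a := by
    rw [div_le_iff₀ ha₀]; linarith
  have hprod_pos : 0 < ∏ j, F j a := lt_of_lt_of_le (div_pos (by linarith) ha₀) hprod
  have hFa_pos : ∀ j ∈ univ, 0 < F j a := fun j _ =>
    lt_of_le_of_ne (hrange j a ha₀.le).1 fun h => hprod_pos.ne' (prod_eq_zero (mem_univ j) h.symm)
  have htail_sum : ∑ j, (1 - F j a) ≤ (a - 1)⁻¹ :=
    calc ∑ j, (1 - F j a) ≤ (∏ j, F j a)⁻¹ - 1 := sum_one_sub_le_inv_prod_sub_one _ hFa_pos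
      _ ≤ ((a - 1) / a)⁻¹ - 1 := by gcongr
      _ = (a - 1)⁻¹ := by field_simp [(sub_pos.2 ha).ne']; ring
  have hb : 0 ≤ b := by linarith
  have hexponent : 1 ≤ b / a := (one_le_div ha₀).2 hab
  calc 1 - ∏ j, F j b ≤ ∑ j, (1 - F j b) :=
        one_sub_prod_le_sum_one_sub _ (fun j _ => (hrange j b hb).1)
          (fun j _ => (hrange j b hb).2.le)
    _ ≤ ∑ j, (1 - F j a) ^ (b / a) := sum_le_sum fun j _ =>
        one_sub_le_rpow_of_concaveOn_log_one_sub (hmhr j) (hzero j)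
          (hrange j a ha₀.le).2 (hrange j b hb).2 ha₀ hab
    _ ≤ (∑ j, (1 - F j a)) ^ (b / a) :=
        Real.sum_rpow_le_rpow_sum _ (fun j _ => sub_nonneg.2 (hrange j a ha₀.le).2.le) hexponent
    _ ≤ (a - 1)⁻¹ ^ (b / a) := by
        gcongr
        exact sum_nonneg fun j _ => sub_nonneg.2 (hrange j a ha₀.le).2.le

theorem mhr_highest_cdf_tail_general
    (n : ℕ) (F : Fin n → ℝ → ℝ)
    (hrange : ∀ j, ∀ v, 0 ≤ v → F j v ∈ Set.Ico (0 : ℝ) 1)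
    (hzero : ∀ j, F j 0 = 0)
    (hmhr : ∀ j, ConcaveOn ℝ (Set.Ici 0) (fun v => Real.log (1 - F j v)))
    (hnorm : ∀ v, 0 ≤ v → v * (1 - ∏ j, F j v) ≤ 1) :
    ∀ v, Real.exp 1 ≤ v → 1 - 3 / 2 * Real.exp (-v / 6) ≤ ∏ j, F j v := by
  intro v hv
  have he₀ : 0 < Real.exp 1 := Real.exp_pos 1
  have he : 1 < Real.exp 1 := Real.one_lt_exp_iff.2 one_pos
  have htail := one_sub_prod_le_inv_sub_one_rpow hrange hzero hmhr he (hnorm _ he₀.le) hv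
  have hpow : (Real.exp 1 - 1)⁻¹ ^ (v / Real.exp 1) ≤ Real.exp (-v / 6) :=
    calc _ ≤ Real.exp (-Real.exp 1 / 6) ^ (v / Real.exp 1) :=
          Real.rpow_le_rpow (inv_nonneg.2 (by linarith)) inv_exp_one_sub_one_le_exp
            (div_nonneg (he₀.le.trans hv) he₀.le)
      _ = Real.exp (-v / 6) := by rw [← Real.exp_mul]; congr 1; field_simp
  linarith [Real.exp_pos (-v / 6)]

/-- Extreme value theorem for continuous MHR instances (Part 1): if each `F_j` is a
continuous MHR marginal (i.e. `v ↦ ln(1 − F_j(v))` is concave on `[0,∞)`), `F_j(0) = 0`,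
and the highest CDF `F⁽¹⁾ = ∏_j F_j` satisfies the normalization
`v·(1 − F⁽¹⁾(v)) ≤ 1`, then `F⁽¹⁾(v) ≥ 1 − (3/2)·e^{−v/6}` for every `v ≥ e`. -/
theorem mhr_highest_cdf_tail
    (n : ℕ) (hn : 1 ≤ n) (F : Fin n → ℝ → ℝ)
    (hrange : ∀ j, ∀ v, 0 ≤ v → F j v ∈ Set.Ico (0 : ℝ) 1)
    (hmono : ∀ j, MonotoneOn (F j) (Set.Ici 0))
    (hzero : ∀ j, F j 0 = 0)
    (hmhr : ∀ j, ConcaveOn ℝ (Set.Ici 0) (fun v => Real.log (1 - F j v)))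
    (hnorm : ∀ v, 0 ≤ v → v * (1 - ∏ j, F j v) ≤ 1) :
    ∀ v, Real.exp 1 ≤ v → 1 - 3 / 2 * Real.exp (-v / 6) ≤ ∏ j, F j v :=
  mhr_highest_cdf_tail_general n F hrange hzero hmhr hnorm
end

section
/- Let F₁, F₂ : ℝ → [0,1] with x ↦ 1 − F₂(x) measurable, nonnegative and integrable on (0,∞), and suppose F₁(v) ≥ 1 − (3/2)·e^{−v/6} for all v ≥ e. Suppose r̄ ≥ 0 satisfies r̄·(1 − F₁(r̄)) = 1. Then for every r ≥ max(r̄, e) with (3/2)·r·e^{−r/6} ≤ 1, AR(r̄, F₁, F₂) ≥ AR(r, F₁, F₂). In particular, since (3/2)·z·e^{−z/6} < 1 for every z > C*, where C* ≈ 20.5782 is the larger root of the equation (3/2)·z·e^{−z/6} = 1, no reserve larger than max(r̄, C*) yields strictly more revenue than r̄; hence some optimal Anonymous Reserve lies in [0, C*]. -/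
/-! Raising the reserve from `r̄` to `r` can only shrink the integral term of `AR`, and the
tail bound together with `(3/2)·r·e^{−r/6} ≤ 1` caps the posted-price term at `r` by `1`,
which is exactly its value at `r̄`. -/

open MeasureTheory

lemma setIntegral_Ioi_le_of_le {f : ℝ → ℝ} {a b : ℝ} (hab : a ≤ b) (hf : ∀ x, 0 ≤ f x)
    (hint : IntegrableOn f (Set.Ioi a)) :
    ∫ x in Set.Ioi b, f x ≤ ∫ x in Set.Ioi a, f x :=
  setIntegral_mono_set hint (.of_forall hf) (.of_forall (Set.Ioi_subset_Ioi hab))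

lemma AR_le_AR_of_le_s18 {F1 F2 : ℝ → ℝ} {r s : ℝ} (hsr : s ≤ r)
    (hprice : r * (1 - F1 r) ≤ s * (1 - F1 s)) (hnonneg : ∀ x, 0 ≤ 1 - F2 x)
    (hint : IntegrableOn (fun x => 1 - F2 x) (Set.Ioi s)) :
    AR r F1 F2 ≤ AR s F1 F2 :=
  add_le_add hprice (setIntegral_Ioi_le_of_le hsr hnonneg hint)

lemma mul_one_sub_le_one_of_tail {F : ℝ → ℝ} {r : ℝ} (hr : 0 ≤ r)
    (htail : 1 - 3 / 2 * Real.exp (-r / 6) ≤ F r) (hre : 3 / 2 * r * Real.exp (-r / 6) ≤ 1) :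
    r * (1 - F r) ≤ 1 :=
  calc r * (1 - F r) ≤ r * (3 / 2 * Real.exp (-r / 6)) := by gcongr; linarith
    _ = 3 / 2 * r * Real.exp (-r / 6) := by ring
    _ ≤ 1 := hre

theorem mhr_optimal_reserve_bound_general
    (F1 F2 : ℝ → ℝ)
    (hnonneg : ∀ x, 0 ≤ 1 - F2 x)
    (hint : IntegrableOn (fun x => 1 - F2 x) (Set.Ioi 0))
    (htail : ∀ v, Real.exp 1 ≤ v → 1 - 3 / 2 * Real.exp (-v / 6) ≤ F1 v)
    (rbar : ℝ) (hrbar : 0 ≤ rbar) (hnorm : rbar * (1 - F1 rbar) = 1) :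
    ∀ r, max rbar (Real.exp 1) ≤ r → 3 / 2 * r * Real.exp (-r / 6) ≤ 1 →
      AR r F1 F2 ≤ AR rbar F1 F2 := by
  intro r hr hre
  obtain ⟨hrbar_le, he_le⟩ := max_le_iff.mp hr
  have hprice : r * (1 - F1 r) ≤ rbar * (1 - F1 rbar) := by
    rw [hnorm]
    exact mul_one_sub_le_one_of_tail ((Real.exp_pos 1).le.trans he_le) (htail r he_le) hre
  exact AR_le_AR_of_le_s18 hrbar_le hprice hnonneg (hint.mono_set (Set.Ioi_subset_Ioi hrbar))

/-- For an MHR instance normalized so that the monopoly term attains `1` at `r̄`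
(`r̄·(1 − F1(r̄)) = 1`) and with the MHR tail bound `F1(v) ≥ 1 − (3/2)e^{−v/6}` for
`v ≥ e`, every reserve `r ≥ max(r̄, e)` with `(3/2)·r·e^{−r/6} ≤ 1` yields no more
Anonymous Reserve revenue than `r̄`. -/
theorem mhr_optimal_reserve_bound
    (F1 F2 : ℝ → ℝ)
    (hF1 : ∀ v, F1 v ∈ Set.Icc (0 : ℝ) 1) (hF2 : ∀ v, F2 v ∈ Set.Icc (0 : ℝ) 1)
    (hmeas : Measurable fun x => 1 - F2 x)
    (hnonneg : ∀ x, 0 ≤ 1 - F2 x)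
    (hint : IntegrableOn (fun x => 1 - F2 x) (Set.Ioi 0))
    (htail : ∀ v, Real.exp 1 ≤ v → 1 - 3 / 2 * Real.exp (-v / 6) ≤ F1 v)
    (rbar : ℝ) (hrbar : 0 ≤ rbar) (hnorm : rbar * (1 - F1 rbar) = 1) :
    ∀ r, max rbar (Real.exp 1) ≤ r → 3 / 2 * r * Real.exp (-r / 6) ≤ 1 →
      AR r F1 F2 ≤ AR rbar F1 F2 :=
  mhr_optimal_reserve_bound_general F1 F2 hnonneg hint htail rbar hrbar hnorm
end
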